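/- (Conservation of energy.) Let u solve the Cauchy problem for the shifted wave equation on T_q with finitely supported data f, g : T_q → ℂ (so that each function u(·,n) is finitely supported). Then the total energy E(n) = K(n) + P(n) is independent of n ∈ ℤ: E(n) = E(0) for all n. -/

import Mathlib

open scoped BigOperators

/-- A homogeneous tree of degree `q + 1`: a connected acyclic simple graph in which
every vertex has exactly `q + 1` neighbours. Spheres for the graph distance are finite. -/
structure HomTree (q : ℕ) where
  V : Type
  G : SimpleGraph V
  conn : G.Connected
  acyclic : G.IsAcyclic
  sphereFin : ∀ (x : V) (n : ℕ), {y : V | G.dist x y = n}.Finite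
  nbrFin : ∀ x : V, {y : V | G.Adj x y}.Finite
  degree : ∀ x : V, (nbrFin x).toFinset.card = q + 1

namespace HomTree

variable {q : ℕ}

/-- The sphere `S(x,n)` as a finite set. -/
noncomputable def sphere (T : HomTree q) (x : T.V) (n : ℕ) : Finset T.V :=
  (T.sphereFin x n).toFinset

/-- The volume `δ(n)` of spheres. -/
def delta (q n : ℕ) : ℕ := if n = 0 then 1 else (q + 1) * q ^ (n - 1)

/-- The combinatorial Laplacian on the tree. -/
noncomputable def lap (T : HomTree q) (f : T.V → ℂ) (x : T.V) : ℂ :=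
  f x - (1 / ((q : ℂ) + 1)) * ∑ y ∈ T.sphere x 1, f y

/-- Spherical means. -/
noncomputable def sphMean (T : HomTree q) (f : T.V → ℂ) (x : T.V) (n : ℕ) : ℂ :=
  (1 / (delta q n : ℂ)) * ∑ y ∈ T.sphere x n, f y

/-- Real powers of `q`, as a complex number. -/
noncomputable def qpow (q : ℕ) (x : ℝ) : ℂ := (((q : ℝ) ^ x : ℝ) : ℂ)

/-- `γ = 2 / (q^{1/2} + q^{-1/2})`. -/
noncomputable def gam (q : ℕ) : ℝ := 2 / ((q : ℝ) ^ ((1 : ℝ)/2) + (q : ℝ) ^ (-(1 : ℝ)/2))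

/-- The combinatorial Laplacian on `ℤ`. -/
noncomputable def lapZ (φ : ℤ → ℂ) (m : ℤ) : ℂ := φ m - (φ (m + 1) + φ (m - 1)) / 2

lemma ball_finite (T : HomTree q) (x : T.V) (n : ℕ) :
    {y : T.V | T.G.dist x y ≤ n}.Finite := by
  have h : {y : T.V | T.G.dist x y ≤ n} ⊆ ⋃ m ∈ Set.Iic n, {y : T.V | T.G.dist x y = m} := by
    intro y hy
    exact Set.mem_biUnion hy rfl
  exact (((Set.finite_Iic n)).biUnion fun m _ => T.sphereFin x m).subset h

/-- The ball `B(x,n)` as a finite set. -/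
noncomputable def ball (T : HomTree q) (x : T.V) (n : ℕ) : Finset T.V :=
  (T.ball_finite x n).toFinset

/-- The operator `M_n` (with `M_n = 0` for `n < 0`). -/
noncomputable def Mop (T : HomTree q) (n : ℤ) (f : T.V → ℂ) (x : T.V) : ℂ :=
  if 0 ≤ n then
    qpow q (-(n : ℝ) / 2) *
      ∑ y ∈ (T.ball x n.toNat).filter (fun y => (n.toNat - T.G.dist x y) % 2 = 0), f y
  else 0

/-- The operator `C_n = (M_{|n|} - M_{|n|-2})/2`, `C_0 = Id`. -/
noncomputable def Cop (T : HomTree q) (n : ℤ) (f : T.V → ℂ) (x : T.V) : ℂ :=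
  if n = 0 then f x else (Mop T |n| f x - Mop T (|n| - 2) f x) / 2

/-- The operator `S_n = sign(n) · M_{|n|-1}`. -/
noncomputable def Sop (T : HomTree q) (n : ℤ) (g : T.V → ℂ) (x : T.V) : ℂ :=
  (n.sign : ℂ) * Mop T (|n| - 1) g x

/-- `u` solves the shifted wave equation on the tree. -/
def IsWaveSol (T : HomTree q) (u : T.V → ℤ → ℂ) : Prop :=
  ∀ (x : T.V) (n : ℤ),
    u x (n + 1) + u x (n - 1) = qpow q (-(1 : ℝ)/2) * ∑ y ∈ T.sphere x 1, u y n

/-- `u` solves the Cauchy problem for the shifted wave equation with data `f`, `g`. -/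
def IsCauchy (T : HomTree q) (f g : T.V → ℂ) (u : T.V → ℤ → ℂ) : Prop :=
  IsWaveSol T u ∧ (∀ x, u x 0 = f x) ∧ ∀ x, (u x 1 - u x (-1)) / 2 = g x

/-- Kinetic energy. -/
noncomputable def kinetic (T : HomTree q) (u : T.V → ℤ → ℂ) (n : ℤ) : ℝ :=
  (1/2) * ∑' x : T.V, ‖(u x (n + 1) - u x (n - 1)) / 2‖ ^ 2

/-- Potential energy. -/
noncomputable def potential (T : HomTree q) (u : T.V → ℤ → ℂ) (n : ℤ) : ℝ :=
  (1 / (4 * (q : ℝ))) * ∑' p : T.V × T.V,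
      (if T.G.dist p.1 p.2 = 2 then ‖(u p.1 n - u p.2 n) / 2‖ ^ 2 else 0)
    - (((q : ℝ) - 1) ^ 2 / (8 * (q : ℝ))) * ∑' x : T.V, ‖u x n‖ ^ 2

/-- The two-step Laplacian. -/
noncomputable def lap2 (T : HomTree q) (f : T.V → ℂ) (x : T.V) : ℂ :=
  f x - (1 / ((q : ℂ) * ((q : ℂ) + 1))) * ∑ y ∈ T.sphere x 2, f y

end HomTree

/-!
Write `A` for the adjacency operator, `c = √q`, `‖·‖` and `⟪·,·⟫` for the real `ℓ²` norm and
pairing, and `uₙ = u(·,n)`. In a tree `∑_{S(x,2)} = A² - (q+1)` and `|S(x,2)| = q(q+1)`, so the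
distance-two sum in the potential energy equals `((q+1)²‖uₙ‖² - ‖A uₙ‖²)/2`. The wave equation
`A uₙ = c (uₙ₊₁ + uₙ₋₁)` then collapses the energy to `E(n) = (‖uₙ‖² - ⟪uₙ₊₁, uₙ₋₁⟫)/2`.
Eliminating `uₙ₋₁` from `E(n)` and `uₙ₊₂` from `E(n+1)` with the wave equation leaves
`(‖uₙ‖² + ‖uₙ₊₁‖²)/2` minus `⟪uₙ₊₁, A uₙ⟫/(2c)`, resp. `⟪A uₙ₊₁, uₙ⟫/(2c)`, and these agree
because `A` is symmetric. All sums are finite because finitely supported data stay finitely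
supported under the wave equation.
-/

open Function Finset
open scoped InnerProductSpace

section FiniteSupport

variable {α M N P : Type*} [Zero M] [Zero N] [Zero P]

lemma hasFiniteSupport_of_eq_zero_of_eq_zero {f : α → M} {g : α → N} {F : α → P}
    (hf : HasFiniteSupport f) (hg : HasFiniteSupport g) (hF : ∀ x, f x = 0 → g x = 0 → F x = 0) :
    HasFiniteSupport F :=
  (hf.union hg).subset fun x hx => by
    by_contra h
    simp only [Set.mem_union, mem_support, not_or, not_not] at h
    exact hx (hF x h.1 h.2)

theorem tsum_inner_eq_of_add_eq {E : Type*} [NormedAddCommGroup E] [InnerProductSpace ℝ E]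
    {a b w : α → E} {c : ℝ} (ha : HasFiniteSupport a) (h : ∀ x, a x + b x = c • w x) :
    ∑' x, ⟪a x, b x⟫_ℝ = c * ∑' x, ⟪a x, w x⟫_ℝ - ∑' x, ‖a x‖ ^ 2 := by
  rw [← tsum_mul_left, ← Summable.tsum_sub]
  · refine tsum_congr fun x => ?_
    rw [eq_sub_of_add_eq' (h x), inner_sub_right, real_inner_smul_right,
      real_inner_self_eq_norm_sq]
  all_goals exact summable_of_hasFiniteSupport (ha.subset fun x hx hax => hx (by simp [hax]))

end FiniteSupport

namespace HomTree

variable {q : ℕ} (T : HomTree q)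

section Spheres

lemma mem_sphere {x y : T.V} {n : ℕ} : y ∈ T.sphere x n ↔ T.G.dist x y = n :=
  Set.Finite.mem_toFinset _

lemma mem_sphere_comm {x y : T.V} {n : ℕ} : y ∈ T.sphere x n ↔ x ∈ T.sphere y n := by
  rw [mem_sphere, mem_sphere, SimpleGraph.dist_comm]

lemma mem_sphere_one {x y : T.V} : y ∈ T.sphere x 1 ↔ T.G.Adj x y := by
  rw [mem_sphere, SimpleGraph.dist_eq_one_iff_adj]

lemma card_sphere_one (x : T.V) : #(T.sphere x 1) = q + 1 := by
  rw [← T.degree x]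
  congr 1
  ext y
  rw [mem_sphere_one, Set.Finite.mem_toFinset, Set.mem_ofPred_eq]

noncomputable def adjOp {E : Type*} [AddCommMonoid E] (f : T.V → E) (x : T.V) : E :=
  ∑ y ∈ T.sphere x 1, f y

lemma path_unique {x z : T.V} {p p' : T.G.Walk x z} (hp : p.IsPath) (hp' : p'.IsPath) :
    p = p' :=
  congrArg Subtype.val ((T.acyclic.subsingleton_path x z).elim ⟨p, hp⟩ ⟨p', hp'⟩)

lemma eq_of_adj_of_adj {x y y' z : T.V} (hzx : z ≠ x) (hxy : T.G.Adj x y) (hyz : T.G.Adj y z)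
    (hxy' : T.G.Adj x y') (hy'z : T.G.Adj y' z) : y = y' := by
  have h := T.path_unique (p := .cons hxy (.cons hyz .nil)) (p' := .cons hxy' (.cons hy'z .nil))
    (by simp [hxy.ne, hyz.ne, hzx.symm]) (by simp [hxy'.ne, hy'z.ne, hzx.symm])
  simpa using congrArg SimpleGraph.Walk.support h

lemma dist_eq_two_iff {x z : T.V} :
    T.G.dist x z = 2 ↔ z ≠ x ∧ ∃ y, T.G.Adj x y ∧ T.G.Adj y z := by
  constructor
  · intro h
    refine ⟨fun hzx => by simp [hzx] at h, ?_⟩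
    obtain ⟨p, hp⟩ := (T.conn.preconnected x z).exists_walk_length_eq_dist
    rw [h] at hp
    rcases p with _ | ⟨hxy, _ | ⟨hyz, _ | ⟨_, _⟩⟩⟩
    all_goals simp at hp
    exact ⟨_, hxy, hyz⟩
  · rintro ⟨hzx, y, hxy, hyz⟩
    have hle : T.G.dist x z ≤ 2 := SimpleGraph.dist_le (.cons hxy (.cons hyz .nil))
    have hne0 : T.G.dist x z ≠ 0 := fun h => hzx ((T.conn.dist_eq_zero_iff).mp h).symm
    have hne1 : T.G.dist x z ≠ 1 := fun h => by
      have hxz := SimpleGraph.dist_eq_one_iff_adj.mp h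
      have := T.path_unique (p := .cons hxz .nil) (p' := .cons hxy (.cons hyz .nil))
        (by simp [hxz.ne]) (by simp [hxy.ne, hyz.ne, hzx.symm])
      simpa using congrArg SimpleGraph.Walk.length this
    omega

lemma sphere_two_eq_biUnion [DecidableEq T.V] (x : T.V) :
    T.sphere x 2 = (T.sphere x 1).biUnion fun y => (T.sphere y 1).erase x := by
  ext z
  simp only [mem_biUnion, mem_erase, mem_sphere_one]
  rw [mem_sphere, dist_eq_two_iff]
  tauto

lemma pairwiseDisjoint_sphere_one_erase [DecidableEq T.V] (x : T.V) :
    (T.sphere x 1 : Set T.V).PairwiseDisjoint fun y => (T.sphere y 1).erase x := by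
  intro y hy y' hy' hne
  simp only [mem_coe, mem_sphere_one] at hy hy'
  refine disjoint_left.mpr fun z hz hz' => hne ?_
  simp only [mem_erase, mem_sphere_one] at hz hz'
  exact T.eq_of_adj_of_adj hz.1 hy hz.2 hy' hz'.2

theorem sum_sphere_two {M : Type*} [AddCommGroup M] (x : T.V) (f : T.V → M) :
    ∑ z ∈ T.sphere x 2, f z = T.adjOp (T.adjOp f) x - (q + 1) • f x := by
  classical
  simp only [adjOp]
  have hx : ∀ y ∈ T.sphere x 1, x ∈ T.sphere y 1 := fun y hy => T.mem_sphere_comm.mp hy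
  rw [T.sphere_two_eq_biUnion, sum_biUnion (T.pairwiseDisjoint_sphere_one_erase x),
    sum_congr rfl fun y hy => sum_erase_eq_sub (hx y hy), sum_sub_distrib, sum_const,
    card_sphere_one]

lemma card_sphere_two (x : T.V) : #(T.sphere x 2) = q * (q + 1) := by
  have h := T.sum_sphere_two x (fun _ => (1 : ℤ))
  simp only [adjOp, sum_const, card_sphere_one, nsmul_eq_mul, mul_one] at h
  have h' : (#(T.sphere x 2) : ℤ) = (q * (q + 1) : ℕ) := by rw [h]; push_cast; ring
  exact_mod_cast h'

end Spheres

section PairSums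

variable {M : Type*} {s : Set T.V} {F : T.V → T.V → M}

lemma hasFiniteSupport_ite_dist [Zero M] (hs : s.Finite) (hF : ∀ x y, F x y ≠ 0 → x ∈ s ∨ y ∈ s)
    (r : ℕ) :
    HasFiniteSupport fun p : T.V × T.V => if T.G.dist p.1 p.2 = r then F p.1 p.2 else 0 := by
  have hfin : ∀ x, {y | T.G.dist x y = r}.Finite := fun x => T.sphereFin x r
  refine ((hs.biUnion fun x _ => (Set.finite_singleton x).prod (hfin x)).union
    (hs.biUnion fun y _ => (hfin y).prod (Set.finite_singleton y))).subset ?_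
  rintro ⟨x, y⟩ hxy
  simp only [mem_support, ne_eq, ite_eq_right_iff, not_forall] at hxy
  obtain ⟨hd, hne⟩ := hxy
  rcases hF x y hne with hx | hy
  · exact Or.inl (Set.mem_biUnion hx ⟨rfl, hd⟩)
  · exact Or.inr (Set.mem_biUnion hy ⟨by rwa [Set.mem_ofPred_eq, SimpleGraph.dist_comm], rfl⟩)

variable [NormedAddCommGroup M] [CompleteSpace M]

theorem tsum_ite_dist_eq_tsum_sum_sphere (hs : s.Finite) (hF : ∀ x y, F x y ≠ 0 → x ∈ s ∨ y ∈ s)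
    (r : ℕ) :
    ∑' p : T.V × T.V, (if T.G.dist p.1 p.2 = r then F p.1 p.2 else 0)
      = ∑' x, ∑ y ∈ T.sphere x r, F x y := by
  rw [(summable_of_hasFiniteSupport (T.hasFiniteSupport_ite_dist hs hF r)).tsum_prod]
  congr 1
  funext x
  rw [tsum_eq_sum (s := T.sphere x r) fun y hy => if_neg (mt T.mem_sphere.mpr hy)]
  exact sum_congr rfl fun y hy => if_pos (T.mem_sphere.mp hy)

theorem tsum_sum_sphere_comm (hs : s.Finite) (hF : ∀ x y, F x y ≠ 0 → x ∈ s ∨ y ∈ s) (r : ℕ) :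
    ∑' x, ∑ y ∈ T.sphere x r, F x y = ∑' y, ∑ x ∈ T.sphere y r, F x y := by
  rw [← T.tsum_ite_dist_eq_tsum_sum_sphere hs hF,
    ← T.tsum_ite_dist_eq_tsum_sum_sphere (F := fun x y => F y x) hs (fun x y h => (hF y x h).symm),
    ← (Equiv.prodComm _ _).tsum_eq]
  refine tsum_congr fun p => ?_
  simp only [Equiv.prodComm_apply, Prod.fst_swap, Prod.snd_swap, SimpleGraph.dist_comm]

end PairSums

section Adjacency

lemma hasFiniteSupport_adjOp {E : Type*} [AddCommMonoid E] {f : T.V → E}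
    (hf : HasFiniteSupport f) : HasFiniteSupport (T.adjOp f) := by
  refine (hf.biUnion fun y _ => (T.sphere y 1).finite_toSet).subset fun x hx => ?_
  obtain ⟨y, hy, hfy⟩ := exists_ne_zero_of_sum_ne_zero hx
  exact Set.mem_biUnion hfy (T.mem_sphere_comm.mp hy)

variable {E : Type*} [NormedAddCommGroup E]

lemma tsum_dist_two_norm_sq {v : T.V → E} (hv : HasFiniteSupport v) :
    ∑' p : T.V × T.V, (if T.G.dist p.1 p.2 = 2 then ‖v p.1‖ ^ 2 else 0)
      = q * (q + 1) * ∑' x, ‖v x‖ ^ 2 := by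
  refine (T.tsum_ite_dist_eq_tsum_sum_sphere (F := fun x _ => ‖v x‖ ^ 2) hv
    (fun x y h => Or.inl fun hvx => h (by simp [hvx])) 2).trans ?_
  rw [← tsum_mul_left]
  simp [card_sphere_two]

variable [InnerProductSpace ℝ E]

theorem tsum_inner_adjOp_left (f : T.V → E) {g : T.V → E} (hg : HasFiniteSupport g) :
    ∑' x, ⟪T.adjOp f x, g x⟫_ℝ = ∑' x, ⟪f x, T.adjOp g x⟫_ℝ := by
  simp only [adjOp, sum_inner, inner_sum]
  exact T.tsum_sum_sphere_comm hg
    (fun x y h => Or.inl fun hgx => h (by rw [hgx, inner_zero_right])) 1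

lemma tsum_dist_two_inner {v : T.V → E} (hv : HasFiniteSupport v) :
    ∑' p : T.V × T.V, (if T.G.dist p.1 p.2 = 2 then ⟪v p.1, v p.2⟫_ℝ else 0)
      = ∑' x, ‖T.adjOp v x‖ ^ 2 - (q + 1) * ∑' x, ‖v x‖ ^ 2 := by
  refine (T.tsum_ite_dist_eq_tsum_sum_sphere (F := fun x y => ⟪v x, v y⟫_ℝ) hv
    (fun x y h => Or.inl fun hvx => h (by simp [hvx])) 2).trans ?_
  have hsq := T.tsum_inner_adjOp_left v (T.hasFiniteSupport_adjOp hv)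
  simp only [real_inner_self_eq_norm_sq] at hsq
  rw [hsq, ← tsum_mul_left, ← Summable.tsum_sub]
  · refine tsum_congr fun x => ?_
    rw [← inner_sum, sum_sphere_two, inner_sub_right, ← Nat.cast_smul_eq_nsmul ℝ,
      real_inner_smul_right, real_inner_self_eq_norm_sq]
    push_cast
    ring
  all_goals exact summable_of_hasFiniteSupport (hv.subset fun x hx hvx => hx (by simp [hvx]))

theorem tsum_dist_two_norm_sub_sq {v : T.V → E} (hv : HasFiniteSupport v) :
    ∑' p : T.V × T.V, (if T.G.dist p.1 p.2 = 2 then ‖v p.1 - v p.2‖ ^ 2 else 0)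
      = 2 * (((q : ℝ) + 1) ^ 2 * ∑' x, ‖v x‖ ^ 2 - ∑' x, ‖T.adjOp v x‖ ^ 2) := by
  have hsummable {F : T.V → T.V → ℝ} (hF : ∀ x y, F x y ≠ 0 → v x ≠ 0 ∨ v y ≠ 0) :
      Summable fun p : T.V × T.V => if T.G.dist p.1 p.2 = 2 then F p.1 p.2 else 0 :=
    summable_of_hasFiniteSupport (T.hasFiniteSupport_ite_dist hv hF 2)
  have hswap : ∑' p : T.V × T.V, (if T.G.dist p.1 p.2 = 2 then ‖v p.2‖ ^ 2 else 0)
      = ∑' p : T.V × T.V, (if T.G.dist p.1 p.2 = 2 then ‖v p.1‖ ^ 2 else 0) := by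
    rw [← (Equiv.prodComm _ _).tsum_eq]
    simp only [Equiv.prodComm_apply, Prod.fst_swap, Prod.snd_swap, SimpleGraph.dist_comm]
  calc ∑' p : T.V × T.V, (if T.G.dist p.1 p.2 = 2 then ‖v p.1 - v p.2‖ ^ 2 else 0)
      = ∑' p : T.V × T.V, ((if T.G.dist p.1 p.2 = 2 then ‖v p.1‖ ^ 2 else 0)
          + (if T.G.dist p.1 p.2 = 2 then ‖v p.2‖ ^ 2 else 0)
          - 2 * (if T.G.dist p.1 p.2 = 2 then ⟪v p.1, v p.2⟫_ℝ else 0)) := by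
        refine tsum_congr fun p => ?_
        split_ifs
        · rw [norm_sub_sq_real]
          ring
        · ring
    _ = 2 * (((q : ℝ) + 1) ^ 2 * ∑' x, ‖v x‖ ^ 2 - ∑' x, ‖T.adjOp v x‖ ^ 2) := by
        have h1 := hsummable (F := fun x _ => ‖v x‖ ^ 2) fun x y h =>
          Or.inl fun hvx => h (by simp [hvx])
        have h2 := hsummable (F := fun _ y => ‖v y‖ ^ 2) fun x y h =>
          Or.inr fun hvy => h (by simp [hvy])
        have h3 := hsummable (F := fun x y => ⟪v x, v y⟫_ℝ) fun x y h =>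
          Or.inl fun hvx => h (by simp [hvx])
        rw [(h1.add h2).tsum_sub (h3.mul_left 2), h1.tsum_add h2, tsum_mul_left, hswap,
          T.tsum_dist_two_norm_sq hv, T.tsum_dist_two_inner hv]
        ring

end Adjacency

section Energy

lemma kinetic_eq (u : T.V → ℤ → ℂ) (n : ℤ) :
    T.kinetic u n = (∑' x, ‖u x (n + 1) - u x (n - 1)‖ ^ 2) / 8 := by
  simp only [kinetic, norm_div, div_pow, tsum_div_const, Complex.norm_ofNat]
  ring

lemma potential_eq (hq : 0 < q) (u : T.V → ℤ → ℂ) {n : ℤ} (hn : HasFiniteSupport fun x => u x n) :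
    T.potential u n
      = (∑' x, ‖u x n‖ ^ 2) / 2 - (∑' x, ‖T.adjOp (fun y => u y n) x‖ ^ 2) / (8 * q) := by
  have hquarter : ∀ p : T.V × T.V,
      (if T.G.dist p.1 p.2 = 2 then ‖(u p.1 n - u p.2 n) / 2‖ ^ 2 else 0)
        = (if T.G.dist p.1 p.2 = 2 then ‖u p.1 n - u p.2 n‖ ^ 2 else 0) / 4 := fun p => by
    split_ifs
    · simp only [norm_div, div_pow, Complex.norm_ofNat]
      norm_num
    · simp
  have hq' : (q : ℝ) ≠ 0 := by positivity
  rw [potential, tsum_congr hquarter, tsum_div_const, T.tsum_dist_two_norm_sub_sq hn]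
  field_simp
  ring

end Energy

lemma qpow_neg_half (q : ℕ) : qpow q (-(1 : ℝ) / 2) = (((√q)⁻¹ : ℝ) : ℂ) := by
  rw [qpow, neg_div, Real.rpow_neg (Nat.cast_nonneg q), Real.sqrt_eq_rpow]

section Wave

variable {T} {u : T.V → ℤ → ℂ}

theorem IsWaveSol.add_eq_smul_adjOp (hu : T.IsWaveSol u) (x : T.V) (n : ℤ) :
    u x (n + 1) + u x (n - 1) = (√q)⁻¹ • T.adjOp (fun y => u y n) x := by
  rw [hu x n, qpow_neg_half, Complex.real_smul, adjOp]

theorem IsWaveSol.hasFiniteSupport (hu : T.IsWaveSol u) (h₀ : HasFiniteSupport fun x => u x 0)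
    (h₁ : HasFiniteSupport fun x => u x 1) (n : ℤ) : HasFiniteSupport fun x => u x n := by
  have forward (n : ℤ) (hn₀ : HasFiniteSupport fun x => u x (n - 1))
      (hn₁ : HasFiniteSupport fun x => u x n) : HasFiniteSupport fun x => u x (n + 1) :=
    hasFiniteSupport_of_eq_zero_of_eq_zero (T.hasFiniteSupport_adjOp hn₁) hn₀ fun x hA h => by
      have e := hu.add_eq_smul_adjOp x n
      rw [hA, h, smul_zero] at e
      linear_combination e
  have backward (n : ℤ) (hn₁ : HasFiniteSupport fun x => u x n)
      (hn₂ : HasFiniteSupport fun x => u x (n + 1)) : HasFiniteSupport fun x => u x (n - 1) :=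
    hasFiniteSupport_of_eq_zero_of_eq_zero (T.hasFiniteSupport_adjOp hn₁) hn₂ fun x hA h => by
      have e := hu.add_eq_smul_adjOp x n
      rw [hA, h, smul_zero] at e
      linear_combination e
  suffices ∀ n : ℤ, (HasFiniteSupport fun x => u x n) ∧ HasFiniteSupport fun x => u x (n + 1) from
    (this n).1
  intro n
  induction n using Int.induction_on with
  | zero => exact ⟨h₀, h₁⟩
  | succ i ih => exact ⟨ih.2, by simpa using forward (i + 1) (by simpa using ih.1) ih.2⟩
  | pred i ih => exact ⟨backward _ ih.1 ih.2, by simpa using ih.1⟩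

theorem IsCauchy.hasFiniteSupport {f g : T.V → ℂ} (hf : HasFiniteSupport f)
    (hg : HasFiniteSupport g) (hu : T.IsCauchy f g u) (n : ℤ) :
    HasFiniteSupport fun x => u x n := by
  obtain ⟨hw, h₀, h₁⟩ := hu
  have hu₀ : HasFiniteSupport fun x => u x 0 := by simpa only [h₀] using hf
  refine hw.hasFiniteSupport hu₀ ?_ n
  refine hasFiniteSupport_of_eq_zero_of_eq_zero (T.hasFiniteSupport_adjOp hu₀) hg fun x hA hgx => ?_
  have e := hw.add_eq_smul_adjOp x 0
  have e' := h₁ x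
  rw [hA, smul_zero, zero_add, zero_sub] at e
  rw [hgx] at e'
  linear_combination (e + 2 * e') / 2

theorem IsWaveSol.energy_eq (hq : 0 < q) (hu : T.IsWaveSol u)
    (hfin : ∀ n, HasFiniteSupport fun x => u x n) (n : ℤ) :
    T.kinetic u n + T.potential u n
      = (∑' x, ‖u x n‖ ^ 2 - ∑' x, ⟪u x (n + 1), u x (n - 1)⟫_ℝ) / 2 := by
  have hq' : (q : ℝ) ≠ 0 := by positivity
  have hA : ∑' x, ‖T.adjOp (fun y => u y n) x‖ ^ 2 = q * ∑' x, ‖u x (n + 1) + u x (n - 1)‖ ^ 2 := by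
    rw [← tsum_mul_left]
    refine tsum_congr fun x => ?_
    rw [hu.add_eq_smul_adjOp, norm_smul, mul_pow, norm_inv,
      Real.norm_of_nonneg (Real.sqrt_nonneg _), inv_pow, Real.sq_sqrt (Nat.cast_nonneg q)]
    field_simp
  have hsum (F : ℂ → ℂ → ℝ) (hF : F 0 0 = 0) : Summable fun x => F (u x (n + 1)) (u x (n - 1)) :=
    summable_of_hasFiniteSupport <| hasFiniteSupport_of_eq_zero_of_eq_zero (hfin (n + 1))
      (hfin (n - 1)) fun x h₁ h₂ => by rw [h₁, h₂, hF]
  have hpar : ∑' x, ‖u x (n + 1) - u x (n - 1)‖ ^ 2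
      = ∑' x, ‖u x (n + 1) + u x (n - 1)‖ ^ 2 - 4 * ∑' x, ⟪u x (n + 1), u x (n - 1)⟫_ℝ := by
    rw [← tsum_mul_left, ← (hsum (fun a b => ‖a + b‖ ^ 2) (by simp)).tsum_sub
      (hsum (fun a b => 4 * ⟪a, b⟫_ℝ) (by simp))]
    refine tsum_congr fun x => ?_
    rw [norm_sub_sq_real, norm_add_sq_real]
    ring
  rw [T.kinetic_eq, T.potential_eq hq u (hfin n), hA, hpar]
  field_simp
  ring

theorem IsWaveSol.energy_add_one (hq : 0 < q) (hu : T.IsWaveSol u)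
    (hfin : ∀ n, HasFiniteSupport fun x => u x n) (n : ℤ) :
    T.kinetic u (n + 1) + T.potential u (n + 1) = T.kinetic u n + T.potential u n := by
  have hforward := tsum_inner_eq_of_add_eq (hfin (n + 1)) (hu.add_eq_smul_adjOp · n)
  have hbackward := tsum_inner_eq_of_add_eq (b := fun x => u x (n + 1 + 1)) (hfin n) fun x => by
    have e := hu.add_eq_smul_adjOp x (n + 1)
    rwa [add_sub_cancel_right, add_comm _ (u x n)] at e
  have hsymm := T.tsum_inner_adjOp_left (fun x => u x n) (hfin (n + 1))
  rw [hu.energy_eq hq hfin, hu.energy_eq hq hfin, add_sub_cancel_right,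
    tsum_congr fun x => real_inner_comm (u x n) _, hforward, hbackward,
    tsum_congr fun x => real_inner_comm (T.adjOp (fun y => u y n) x) _, hsymm]
  ring

end Wave

end HomTree

open HomTree in
/-- conservation of the total energy. -/
theorem stmt16 {q : ℕ} (hq : 2 ≤ q) (T : HomTree q) (f g : T.V → ℂ)
    (hf : (Function.support f).Finite) (hg : (Function.support g).Finite)
    (u : T.V → ℤ → ℂ) (hu : HomTree.IsCauchy T f g u) :
    ∀ n : ℤ, T.kinetic u n + T.potential u n = T.kinetic u 0 + T.potential u 0 := by
  have hq₀ : 0 < q := by omega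
  have hfin := hu.hasFiniteSupport hf hg
  intro n
  induction n using Int.induction_on with
  | zero => rfl
  | succ i ih => rw [hu.1.energy_add_one hq₀ hfin, ih]
  | pred i ih => rw [← ih, ← hu.1.energy_add_one hq₀ hfin, sub_add_cancel]
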